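/- arXiv:1805.12333 — 2 statements merged into one kernel-verified Lean document; each statement's English description precedes it below -/
import Mathlib

section
/- Let P_X be a probability distribution on a nonempty finite set 𝒳 with P_X(x) > 0 for all x, and let E0 > 0. Then min over all probability distributions Q_X on 𝒳 with D(Q_X‖P_X) ≤ E0 of [ Σ_x Q_X(x) ln(1/P_X(x)) ] − E0 = sup over λ > 0 of { −λ ln( Σ_x P_X(x)^{1+1/λ} ) − (1+λ) E0 }. -/
/-! Weak duality comes from Gibbs' inequality against the unnormalized weight `P ^ β`: for every
distribution `Q`, `-ln Σ P^β ≤ D(Q‖P) + (β - 1) H(Q, P)` with `H(Q, P) = Σ Q ln (1/P)` the cross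
entropy, and equality holds at the escort distribution `Q_β ∝ P^β`. With `β = 1 + 1/λ` this bounds
the Gallager function `-λ ln Σ P^(1+1/λ)` by `H(Q, P) + λ D(Q‖P)`.

Strong duality: `β ↦ D(Q_β‖P)` is continuous and vanishes at `β = 1`. If it reaches `E₀` for some
`β > 1`, the intermediate value theorem gives `Q_β` with `D(Q_β‖P) = E₀`, where primal and dual
values coincide. Otherwise every `Q_β` is feasible, and as `β → ∞` its cross entropy tends to
`ln (1 / max P)`, while every dual value is at least `ln (1 / max P) - (1 + λ) E₀`, so the gap
closes as `λ → 0`. -/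

open Finset

/-- A probability distribution on a finite set: nonnegative and summing to 1. -/
def IsProb {α : Type*} [Fintype α] (Q : α → ℝ) : Prop :=
  (∀ a, 0 ≤ Q a) ∧ ∑ a, Q a = 1

/-- Kullback–Leibler divergence `D(Q‖P) = Σ_a Q(a) ln(Q(a)/P(a))`
(with the convention `0 · ln(0/p) = 0`, automatic since `Real.log 0 = 0`
and the term is multiplied by `Q a = 0`). -/
noncomputable def KL {α : Type*} [Fintype α] (Q P : α → ℝ) : ℝ :=
  ∑ a, Q a * Real.log (Q a / P a)

/-- Shannon entropy `H_Q(X) = -Σ_x Q(x) ln Q(x)` (with `0 ln 0 = 0`). -/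
noncomputable def entropy {α : Type*} [Fintype α] (Q : α → ℝ) : ℝ :=
  -∑ a, Q a * Real.log (Q a)

/-- The 𝒳-marginal of a joint distribution on `𝒳 × 𝒴`. -/
noncomputable def margX {𝒳 𝒴 : Type*} [Fintype 𝒴] (Q : 𝒳 × 𝒴 → ℝ) : 𝒳 → ℝ :=
  fun x => ∑ y, Q (x, y)

/-- The 𝒴-marginal of a joint distribution on `𝒳 × 𝒴`. -/
noncomputable def margY {𝒳 𝒴 : Type*} [Fintype 𝒳] (Q : 𝒳 × 𝒴 → ℝ) : 𝒴 → ℝ :=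
  fun y => ∑ x, Q (x, y)

/-- Conditional entropy `H_Q(X|Y) = -Σ_{x,y} Q(x,y) ln(Q(x,y)/Q_Y(y))` (with `0 ln 0 = 0`). -/
noncomputable def condEnt {𝒳 𝒴 : Type*} [Fintype 𝒳] [Fintype 𝒴] (Q : 𝒳 × 𝒴 → ℝ) : ℝ :=
  -∑ x, ∑ y, Q (x, y) * Real.log (Q (x, y) / margY Q y)

open Real Filter

lemma Real.sub_le_mul_log_div {q r : ℝ} (hq : 0 ≤ q) (hr : 0 < r) : q - r ≤ q * log (q / r) := by
  rcases hq.eq_or_lt with rfl | hq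
  · simpa using hr.le
  have h := one_sub_inv_le_log_of_pos (div_pos hq hr)
  rw [inv_div] at h
  have := mul_le_mul_of_nonneg_left h hq.le
  rwa [mul_sub, mul_one, mul_div_cancel₀ _ hq.ne'] at this

section Finite

variable {α : Type*} [Fintype α]

noncomputable def crossEntropy (Q P : α → ℝ) : ℝ :=
  ∑ x, Q x * log (1 / P x)

noncomputable def escort (P : α → ℝ) (β : ℝ) : α → ℝ :=
  fun x => P x ^ β / ∑ y, P y ^ β

lemma KL_self {P : α → ℝ} (hP : ∀ x, 0 < P x) : KL P P = 0 :=
  Finset.sum_eq_zero fun x _ => by rw [div_self (hP x).ne', log_one, mul_zero]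

lemma neg_log_sum_le_sum_mul_log_div [Nonempty α] {Q R : α → ℝ} (hQ : IsProb Q)
    (hR : ∀ a, 0 < R a) : -log (∑ a, R a) ≤ ∑ a, Q a * log (Q a / R a) := by
  set S := ∑ a, R a
  have hS : 0 < S := Finset.sum_pos (fun a _ => hR a) Finset.univ_nonempty
  have hterm : ∀ a, Q a - R a / S ≤ Q a * log (Q a / R a) + Q a * log S := by
    intro a
    have h := Real.sub_le_mul_log_div (hQ.1 a) (div_pos (hR a) hS)
    rcases (hQ.1 a).eq_or_lt with h0 | h0
    · simpa [← h0] using h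
    rw [div_div_eq_mul_div, log_div (mul_pos h0 hS).ne' (hR a).ne', log_mul h0.ne' hS.ne'] at h
    rw [log_div h0.ne' (hR a).ne']
    linarith
  have := Finset.sum_le_sum fun a (_ : a ∈ Finset.univ) => hterm a
  rw [Finset.sum_sub_distrib, Finset.sum_add_distrib, ← Finset.sum_div, ← Finset.sum_mul,
    hQ.2, div_self hS.ne', one_mul] at this
  linarith

variable {P : α → ℝ}

lemma sum_mul_log_div_rpow (hP : ∀ x, 0 < P x) (Q : α → ℝ) (β : ℝ) :
    ∑ x, Q x * log (Q x / P x ^ β) = KL Q P + (β - 1) * crossEntropy Q P := by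
  rw [KL, crossEntropy, Finset.mul_sum, ← Finset.sum_add_distrib]
  refine Finset.sum_congr rfl fun x _ => ?_
  rcases eq_or_ne (Q x) 0 with h0 | h0
  · simp [h0]
  rw [log_div h0 (rpow_pos_of_pos (hP x) β).ne', log_div h0 (hP x).ne', log_rpow (hP x),
    one_div, log_inv]
  ring

lemma sum_rpow_pos [Nonempty α] (hP : ∀ x, 0 < P x) (β : ℝ) : 0 < ∑ x, P x ^ β :=
  Finset.sum_pos (fun x _ => rpow_pos_of_pos (hP x) β) Finset.univ_nonempty

lemma isProb_escort [Nonempty α] (hP : ∀ x, 0 < P x) (β : ℝ) : IsProb (escort P β) :=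
  ⟨fun x => div_nonneg (rpow_pos_of_pos (hP x) β).le (sum_rpow_pos hP β).le,
    by simp only [escort, ← Finset.sum_div, div_self (sum_rpow_pos hP β).ne']⟩

lemma escort_one (hP : IsProb P) : escort P 1 = P := by
  ext x
  simp [escort, hP.2]

lemma neg_log_sum_rpow_le [Nonempty α] (hP : ∀ x, 0 < P x) {Q : α → ℝ} (hQ : IsProb Q)
    (β : ℝ) : -log (∑ x, P x ^ β) ≤ KL Q P + (β - 1) * crossEntropy Q P :=
  sum_mul_log_div_rpow hP Q β ▸
    neg_log_sum_le_sum_mul_log_div hQ fun x => rpow_pos_of_pos (hP x) β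

lemma neg_log_sum_rpow_eq_escort [Nonempty α] (hP : ∀ x, 0 < P x) (β : ℝ) :
    -log (∑ x, P x ^ β) = KL (escort P β) P + (β - 1) * crossEntropy (escort P β) P := by
  rw [← sum_mul_log_div_rpow hP]
  have hlog : ∀ x, log (escort P β x / P x ^ β) = -log (∑ x, P x ^ β) := fun x => by
    rw [escort, div_right_comm, div_self (rpow_pos_of_pos (hP x) β).ne', one_div, log_inv]
  simp only [hlog, ← Finset.sum_mul, (isProb_escort hP β).2, one_mul]

lemma gallager_le [Nonempty α] (hP : ∀ x, 0 < P x) {Q : α → ℝ} (hQ : IsProb Q) {l : ℝ}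
    (hl : 0 < l) :
    -l * log (∑ x, P x ^ (1 + 1 / l)) ≤ crossEntropy Q P + l * KL Q P := by
  have h := mul_le_mul_of_nonneg_left (neg_log_sum_rpow_le hP hQ (1 + 1 / l)) hl.le
  rw [add_sub_cancel_left, mul_add, ← mul_assoc, mul_one_div_cancel hl.ne', one_mul] at h
  linarith

lemma gallager_eq_escort [Nonempty α] (hP : ∀ x, 0 < P x) {l : ℝ} (hl : 0 < l) :
    -l * log (∑ x, P x ^ (1 + 1 / l)) =
      crossEntropy (escort P (1 + 1 / l)) P + l * KL (escort P (1 + 1 / l)) P := by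
  have h := congrArg (l * ·) (neg_log_sum_rpow_eq_escort hP (1 + 1 / l))
  simp only [add_sub_cancel_left, mul_add, ← mul_assoc, mul_one_div_cancel hl.ne', one_mul] at h
  linarith

lemma continuous_KL_escort [Nonempty α] (hP : ∀ x, 0 < P x) :
    Continuous fun β => KL (escort P β) P := by
  have hpow : ∀ x, Continuous fun β : ℝ => P x ^ β := fun x =>
    continuous_const.rpow continuous_id fun _ => Or.inl (hP x).ne'
  have hesc : ∀ x, Continuous fun β => escort P β x := fun x =>
    (hpow x).div (continuous_finsetSum _ fun y _ => hpow y) fun β => (sum_rpow_pos hP β).ne'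
  refine continuous_finsetSum _ fun x _ => (hesc x).mul (((hesc x).div_const _).log fun β => ?_)
  exact div_ne_zero (div_pos (rpow_pos_of_pos (hP x) β) (sum_rpow_pos hP β)).ne' (hP x).ne'

lemma exists_KL_escort_eq [Nonempty α] (hP : IsProb P) (hPpos : ∀ x, 0 < P x) {E₀ : ℝ}
    (hE₀ : 0 < E₀) (h : ∃ β > 1, E₀ ≤ KL (escort P β) P) :
    ∃ l > 0, KL (escort P (1 + 1 / l)) P = E₀ := by
  obtain ⟨β₀, hβ₀, hE₀β₀⟩ := h
  have hKL₁ : KL (escort P 1) P = 0 := by rw [escort_one hP, KL_self hPpos]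
  obtain ⟨β, hβ, hKL⟩ := intermediate_value_Icc hβ₀.le (continuous_KL_escort hPpos).continuousOn
    ⟨hKL₁ ▸ hE₀.le, hE₀β₀⟩
  have hβ₁ : 1 < β := hβ.1.lt_of_ne fun h => by simp only [← h, hKL₁] at hKL; linarith
  refine ⟨1 / (β - 1), by simpa using hβ₁, ?_⟩
  rwa [one_div_one_div, add_sub_cancel]

lemma crossEntropy_escort_le {x₀ : α} (hP : ∀ x, 0 < P x) (hx₀ : ∀ x, P x ≤ P x₀) (β : ℝ) :
    crossEntropy (escort P β) P ≤ -log (P x₀) + ∑ x, (P x / P x₀) ^ β * log (P x₀ / P x) := by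
  have : Nonempty α := ⟨x₀⟩
  have hZ : P x₀ ^ β ≤ ∑ x, P x ^ β :=
    Finset.single_le_sum (fun x _ => (rpow_pos_of_pos (hP x) β).le) (Finset.mem_univ x₀)
  have hesc : ∀ x, escort P β x ≤ (P x / P x₀) ^ β := fun x => by
    rw [escort, div_rpow (hP x).le (hP x₀).le]
    exact div_le_div_of_nonneg_left (rpow_pos_of_pos (hP x) β).le (rpow_pos_of_pos (hP x₀) β) hZ
  have hterm : ∀ x, escort P β x * log (P x₀ / P x) ≤ (P x / P x₀) ^ β * log (P x₀ / P x) :=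
    fun x => mul_le_mul_of_nonneg_right (hesc x) (log_nonneg ((one_le_div (hP x)).mpr (hx₀ x)))
  have hsplit : ∀ x, escort P β x * log (1 / P x) =
      escort P β x * log (P x₀ / P x) - escort P β x * log (P x₀) := fun x => by
    rw [log_div one_ne_zero (hP x).ne', log_div (hP x₀).ne' (hP x).ne', log_one]
    ring
  calc crossEntropy (escort P β) P
      = ∑ x, escort P β x * log (P x₀ / P x) - log (P x₀) := by
        rw [crossEntropy, Finset.sum_congr rfl fun x _ => hsplit x, Finset.sum_sub_distrib,
          ← Finset.sum_mul, (isProb_escort hP β).2, one_mul]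
    _ ≤ -log (P x₀) + ∑ x, (P x / P x₀) ^ β * log (P x₀ / P x) := by
        linarith [Finset.sum_le_sum fun x (_ : x ∈ Finset.univ) => hterm x]

lemma tendsto_sum_rpow_div_max {x₀ : α} (hP : ∀ x, 0 < P x) (hx₀ : ∀ x, P x ≤ P x₀) :
    Tendsto (fun β : ℝ => ∑ x, (P x / P x₀) ^ β * log (P x₀ / P x)) atTop (nhds 0) := by
  rw [← Finset.sum_const_zero (s := (Finset.univ : Finset α))]
  refine tendsto_finsetSum _ fun x _ => ?_
  rcases (hx₀ x).lt_or_eq with hlt | heq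
  · simpa using (tendsto_rpow_atTop_of_base_lt_one _ (by linarith [div_pos (hP x) (hP x₀)])
      ((div_lt_one (hP x₀)).mpr hlt)).mul_const (log (P x₀ / P x))
  · simp [heq, div_self (hP x₀).ne']

lemma neg_log_max_le_gallager {x₀ : α} (hP : IsProb P) (hPpos : ∀ x, 0 < P x)
    (hx₀ : ∀ x, P x ≤ P x₀) {l : ℝ} (hl : 0 < l) :
    -log (P x₀) ≤ -l * log (∑ x, P x ^ (1 + 1 / l)) := by
  have : Nonempty α := ⟨x₀⟩
  have hsum : ∑ x, P x ^ (1 + 1 / l) ≤ P x₀ ^ (1 / l) :=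
    calc ∑ x, P x ^ (1 + 1 / l) ≤ ∑ x, P x * P x₀ ^ (1 / l) := by
          refine Finset.sum_le_sum fun x _ => ?_
          rw [rpow_add (hPpos x), rpow_one]
          exact mul_le_mul_of_nonneg_left
            (rpow_le_rpow (hPpos x).le (hx₀ x) (by positivity)) (hPpos x).le
      _ = P x₀ ^ (1 / l) := by rw [← Finset.sum_mul, hP.2, one_mul]
  have hlog := log_le_log (sum_rpow_pos hPpos _) hsum
  rw [log_rpow (hPpos x₀)] at hlog
  have := mul_le_mul_of_nonneg_left hlog hl.le
  rw [← mul_assoc, mul_one_div_cancel hl.ne', one_mul] at this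
  linarith

end Finite

lemma csInf_eq_csSup_of_forall_le_of_forall_exists_le {A B : Set ℝ} (hA : A.Nonempty)
    (hB : B.Nonempty) (hle : ∀ a ∈ A, ∀ b ∈ B, b ≤ a)
    (hgap : ∀ ε > 0, ∃ a ∈ A, ∃ b ∈ B, a ≤ b + ε) : sInf A = sSup B := by
  obtain ⟨a₀, ha₀⟩ := hA
  obtain ⟨b₀, hb₀⟩ := hB
  refine le_antisymm (le_of_forall_pos_le_add fun ε hε => ?_)
    (csSup_le ⟨b₀, hb₀⟩ fun b hb => le_csInf ⟨a₀, ha₀⟩ fun a ha => hle a ha b hb)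
  obtain ⟨a, ha, b, hb, hab⟩ := hgap ε hε
  calc sInf A ≤ a := csInf_le ⟨b₀, fun a ha => hle a ha b₀ hb₀⟩ ha
    _ ≤ b + ε := hab
    _ ≤ sSup B + ε := by gcongr; exact le_csSup ⟨a₀, fun b hb => hle a₀ ha₀ b hb⟩ hb

/-- Gallager-style form of `R_w*(E0)`. -/
theorem stmt_1 {𝒳 : Type*} [Fintype 𝒳] [Nonempty 𝒳]
    (P : 𝒳 → ℝ) (hP : IsProb P) (hPpos : ∀ x, 0 < P x)
    (E0 : ℝ) (hE0 : 0 < E0) :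
    sInf {v | ∃ Q : 𝒳 → ℝ, IsProb Q ∧ KL Q P ≤ E0 ∧
        v = (∑ x, Q x * Real.log (1 / P x)) - E0}
      = sSup {v | ∃ l : ℝ, 0 < l ∧
          v = -l * Real.log (∑ x, P x ^ (1 + 1 / l)) - (1 + l) * E0} := by
  change sInf {v | ∃ Q, IsProb Q ∧ KL Q P ≤ E0 ∧ v = crossEntropy Q P - E0} = _
  obtain ⟨x₀, hx₀⟩ := Finite.exists_max P
  refine csInf_eq_csSup_of_forall_le_of_forall_exists_le
    ⟨_, P, hP, (KL_self hPpos).trans_le hE0.le, rfl⟩ ⟨_, 1, one_pos, rfl⟩ ?_ fun ε hε => ?_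
  · rintro _ ⟨Q, hQ, hKL, rfl⟩ _ ⟨l, hl, rfl⟩
    linarith [gallager_le hPpos hQ hl, mul_le_mul_of_nonneg_left hKL hl.le]
  by_cases hbind : ∃ β > 1, E0 ≤ KL (escort P β) P
  · obtain ⟨l, hl, hKL⟩ := exists_KL_escort_eq hP hPpos hE0 hbind
    refine ⟨_, ⟨escort P (1 + 1 / l), isProb_escort hPpos _, hKL.le, rfl⟩, _, ⟨l, hl, rfl⟩, ?_⟩
    have hgal := gallager_eq_escort hPpos hl
    rw [hKL] at hgal
    linarith
  · push Not at hbind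
    obtain ⟨β, hβ, hCE⟩ := ((eventually_gt_atTop 1).and
      ((tendsto_sum_rpow_div_max hPpos hx₀).eventually_lt_const (half_pos hε))).exists
    have hl : 0 < ε / (2 * E0) := by positivity
    refine ⟨_, ⟨escort P β, isProb_escort hPpos β, (hbind β hβ).le, rfl⟩,
      _, ⟨ε / (2 * E0), hl, rfl⟩, ?_⟩
    have hlE : ε / (2 * E0) * E0 = ε / 2 := by field_simp
    linarith [crossEntropy_escort_le hPpos hx₀ β, neg_log_max_le_gallager hP hPpos hx₀ hl]
end

section
/- Let P_XY be a probability distribution on 𝒳×𝒴 with P_XY(x,y) > 0 for all (x,y), with 𝒳-marginal P_X, and let E0 > 0. Then the following Lagrange-duality identity holds: min over all joint probability distributions Q_XY on 𝒳×𝒴 whose 𝒳-marginal Q_X satisfies D(Q_X‖P_X) ≤ E0 of { D(Q_XY‖P_XY) + [ Σ_{x,y} Q_XY(x,y) ln(1/P_X(x)) − E0 − H_Q(X|Y) ]_+ } = sup over λ ∈ [0,1] and ρ ≥ 0 of [ inf over all joint probability distributions Q_XY on 𝒳×𝒴 of { D(Q_XY‖P_XY) + λ( Σ_{x,y} Q_XY(x,y)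 ln(1/P_X(x)) − E0 − H_Q(X|Y) ) + ρ( D(Q_X‖P_X) − E0 ) } ]. -/
/-!
Both sides concern the convex program: minimise `f + [g]₊` subject to `h ≤ E0` over the
probability simplex, with `f Q = D(Q‖P)`, `g Q = Σ Q ln (1 / P_X) - E0 - H_Q(X|Y)` and
`h Q = D(Q_X‖P_X)`. Convexity of `f`, `h` and `-H_Q(X|Y)` all come from the joint convexity of
`(t, s) ↦ t ln (t / s)` (the log-sum inequality), and `P` is a Slater point because
`D(P_X‖P_X) = 0 < E0`. Writing `[g]₊` as the least `t ≥ 0` with `g ≤ t` gives an ordinary convex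
program in `(Q, t)`, to which strong Lagrange duality (Hahn–Banach separation of an open orthant
from the image of the domain) applies; the multiplier of `g ≤ t` is at most `1` because the
Lagrangian must stay bounded below as `t → ∞`. Weak duality gives the other inequality.
-/

open Finset

open Real Filter Topology

lemma sub_le_mul_log_div {t s : ℝ} (ht : 0 ≤ t) (hs : 0 ≤ s) (hst : s = 0 → t = 0) :
    t - s ≤ t * log (t / s) := by
  rcases hs.eq_or_lt with rfl | hs
  · simp [hst rfl]
  have h := mul_nonneg hs.le (InformationTheory.klFun_nonneg (div_nonneg ht hs.le))
  have key : s * InformationTheory.klFun (t / s) = t * log (t / s) + s - t := by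
    rw [InformationTheory.klFun_apply]
    field_simp
  linarith

lemma add_mul_log_div_add_le {t₁ t₂ s₁ s₂ : ℝ} (ht₁ : 0 ≤ t₁) (ht₂ : 0 ≤ t₂)
    (hs₁ : 0 ≤ s₁) (hs₂ : 0 ≤ s₂) (hst₁ : s₁ = 0 → t₁ = 0) (hst₂ : s₂ = 0 → t₂ = 0) :
    (t₁ + t₂) * log ((t₁ + t₂) / (s₁ + s₂)) ≤ t₁ * log (t₁ / s₁) + t₂ * log (t₂ / s₂) := by
  rcases hs₁.eq_or_lt with rfl | hs₁
  · simp [hst₁ rfl]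
  rcases hs₂.eq_or_lt with rfl | hs₂
  · simp [hst₂ rfl]
  -- convexity of `x log x` at the points `tᵢ / sᵢ`, with weights `sᵢ / (s₁ + s₂)`
  have hS : 0 < s₁ + s₂ := add_pos hs₁ hs₂
  have hw : s₁ / (s₁ + s₂) + s₂ / (s₁ + s₂) = 1 := by field_simp
  have h := convexOn_mul_log.2 (Set.mem_Ici.2 (div_nonneg ht₁ hs₁.le))
    (Set.mem_Ici.2 (div_nonneg ht₂ hs₂.le)) (div_nonneg hs₁.le hS.le) (div_nonneg hs₂.le hS.le)
    hw
  have hmid :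
      s₁ / (s₁ + s₂) * (t₁ / s₁) + s₂ / (s₁ + s₂) * (t₂ / s₂) = (t₁ + t₂) / (s₁ + s₂) := by
    field_simp
  simp only [smul_eq_mul] at h
  rw [hmid] at h
  calc (t₁ + t₂) * log ((t₁ + t₂) / (s₁ + s₂))
      = (s₁ + s₂) * ((t₁ + t₂) / (s₁ + s₂) * log ((t₁ + t₂) / (s₁ + s₂))) := by field_simp
    _ ≤ (s₁ + s₂) * (s₁ / (s₁ + s₂) * (t₁ / s₁ * log (t₁ / s₁)) +
          s₂ / (s₁ + s₂) * (t₂ / s₂ * log (t₂ / s₂))) := mul_le_mul_of_nonneg_left h hS.le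
    _ = t₁ * log (t₁ / s₁) + t₂ * log (t₂ / s₂) := by field_simp

lemma mul_log_div_mul_left (c t s : ℝ) :
    c * t * log (c * t / (c * s)) = c * (t * log (t / s)) := by
  rcases eq_or_ne c 0 with rfl | hc
  · simp
  · rw [mul_div_mul_left _ _ hc, mul_assoc]

lemma mul_log_div_convex_combination_le {a b t₁ t₂ s₁ s₂ : ℝ} (ha : 0 ≤ a) (hb : 0 ≤ b)
    (ht₁ : 0 ≤ t₁) (ht₂ : 0 ≤ t₂) (hs₁ : 0 ≤ s₁) (hs₂ : 0 ≤ s₂)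
    (hst₁ : s₁ = 0 → t₁ = 0) (hst₂ : s₂ = 0 → t₂ = 0) :
    (a * t₁ + b * t₂) * log ((a * t₁ + b * t₂) / (a * s₁ + b * s₂)) ≤
      a * (t₁ * log (t₁ / s₁)) + b * (t₂ * log (t₂ / s₂)) := by
  rw [← mul_log_div_mul_left a, ← mul_log_div_mul_left b]
  refine add_mul_log_div_add_le (mul_nonneg ha ht₁) (mul_nonneg hb ht₂) (mul_nonneg ha hs₁)
    (mul_nonneg hb hs₂) (fun h => ?_) (fun h => ?_)
  · rcases mul_eq_zero.1 h with h | h <;> simp [h, hst₁]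
  · rcases mul_eq_zero.1 h with h | h <;> simp [h, hst₂]

section KL

variable {α : Type*} [Fintype α] {Q R : α → ℝ}

lemma IsProb.le_one (hQ : IsProb Q) (a : α) : Q a ≤ 1 :=
  hQ.2 ▸ Finset.single_le_sum (fun b _ => hQ.1 b) (Finset.mem_univ a)

lemma KL_self_s13 (R : α → ℝ) : KL R R = 0 :=
  Finset.sum_eq_zero fun a _ => by by_cases h : R a = 0 <;> simp [h]

lemma sub_le_KL (hQ : ∀ a, 0 ≤ Q a) (hR : ∀ a, 0 ≤ R a) (hQR : ∀ a, R a = 0 → Q a = 0) :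
    ∑ a, Q a - ∑ a, R a ≤ KL Q R := by
  rw [KL, ← Finset.sum_sub_distrib]
  exact Finset.sum_le_sum fun a _ => sub_le_mul_log_div (hQ a) (hR a) (hQR a)

lemma KL_nonneg (hQ : IsProb Q) (hR : IsProb R) (hQR : ∀ a, R a = 0 → Q a = 0) :
    0 ≤ KL Q R := by
  simpa [hQ.2, hR.2] using sub_le_KL hQ.1 hR.1 hQR

lemma convexOn_KL (hR : ∀ a, 0 < R a) : ConvexOn ℝ (Set.Ici 0) (fun Q : α → ℝ => KL Q R) := by
  refine ⟨convex_Ici 0, fun Q₁ hQ₁ Q₂ hQ₂ a b ha hb hab => ?_⟩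
  simp only [KL, smul_eq_mul, Finset.mul_sum, ← Finset.sum_add_distrib, Pi.add_apply,
    Pi.smul_apply]
  refine Finset.sum_le_sum fun x _ => ?_
  have h := mul_log_div_convex_combination_le ha hb (hQ₁ x) (hQ₂ x) (hR x).le (hR x).le
    (fun h => absurd h (hR x).ne') (fun h => absurd h (hR x).ne')
  rwa [← add_mul, hab, one_mul] at h

end KL

section Marginals

variable {𝒳 𝒴 : Type*}

@[simp] lemma margX_add [Fintype 𝒴] (Q₁ Q₂ : 𝒳 × 𝒴 → ℝ) :
    margX (Q₁ + Q₂) = margX Q₁ + margX Q₂ := by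
  ext x; simp [margX, Finset.sum_add_distrib]

@[simp] lemma margX_smul [Fintype 𝒴] (c : ℝ) (Q : 𝒳 × 𝒴 → ℝ) : margX (c • Q) = c • margX Q := by
  ext x; simp [margX, Finset.mul_sum]

@[simp] lemma margY_add [Fintype 𝒳] (Q₁ Q₂ : 𝒳 × 𝒴 → ℝ) :
    margY (Q₁ + Q₂) = margY Q₁ + margY Q₂ := by
  ext y; simp [margY, Finset.sum_add_distrib]

@[simp] lemma margY_smul [Fintype 𝒳] (c : ℝ) (Q : 𝒳 × 𝒴 → ℝ) : margY (c • Q) = c • margY Q := by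
  ext y; simp [margY, Finset.mul_sum]

lemma margX_nonneg [Fintype 𝒴] {Q : 𝒳 × 𝒴 → ℝ} (hQ : 0 ≤ Q) : 0 ≤ margX Q :=
  fun _ => Finset.sum_nonneg fun _ _ => hQ _

lemma margX_pos [Fintype 𝒴] [Nonempty 𝒴] {Q : 𝒳 × 𝒴 → ℝ} (hQ : ∀ p, 0 < Q p) (x : 𝒳) :
    0 < margX Q x :=
  Finset.sum_pos (fun _ _ => hQ _) Finset.univ_nonempty

lemma sum_margX [Fintype 𝒳] [Fintype 𝒴] (Q : 𝒳 × 𝒴 → ℝ) : ∑ x, margX Q x = ∑ p, Q p :=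
  (Fintype.sum_prod_type Q).symm

lemma sum_margY [Fintype 𝒳] [Fintype 𝒴] (Q : 𝒳 × 𝒴 → ℝ) : ∑ y, margY Q y = ∑ p, Q p := by
  rw [Fintype.sum_prod_type, Finset.sum_comm]; rfl

lemma isProb_margX [Fintype 𝒳] [Fintype 𝒴] {Q : 𝒳 × 𝒴 → ℝ} (hQ : IsProb Q) : IsProb (margX Q) :=
  ⟨margX_nonneg hQ.1, (sum_margX Q).trans hQ.2⟩

lemma le_margY [Fintype 𝒳] {Q : 𝒳 × 𝒴 → ℝ} (hQ : 0 ≤ Q) (x : 𝒳) (y : 𝒴) : Q (x, y) ≤ margY Q y :=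
  Finset.single_le_sum (fun x' _ => hQ (x', y)) (Finset.mem_univ x)

lemma margY_nonneg [Fintype 𝒳] {Q : 𝒳 × 𝒴 → ℝ} (hQ : 0 ≤ Q) : 0 ≤ margY Q :=
  fun _ => Finset.sum_nonneg fun _ _ => hQ _

lemma margY_eq_zero [Fintype 𝒳] {Q : 𝒳 × 𝒴 → ℝ} (hQ : 0 ≤ Q) {y : 𝒴} (h : margY Q y = 0) (x : 𝒳) :
    Q (x, y) = 0 :=
  le_antisymm (h ▸ le_margY hQ x y) (hQ _)

lemma convexOn_KL_margX [Fintype 𝒳] [Fintype 𝒴] [Nonempty 𝒴] {P : 𝒳 × 𝒴 → ℝ} (hP : ∀ p, 0 < P p) :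
    ConvexOn ℝ (Set.Ici 0) (fun Q : 𝒳 × 𝒴 → ℝ => KL (margX Q) (margX P)) :=
  ⟨convex_Ici 0, fun Q₁ hQ₁ Q₂ hQ₂ a b ha hb hab => by
    simpa using (convexOn_KL (margX_pos hP)).2 (margX_nonneg hQ₁) (margX_nonneg hQ₂) ha hb hab⟩

lemma convexOn_sum_mul [Fintype 𝒳] [Fintype 𝒴] (w : 𝒳 → ℝ) {s : Set (𝒳 × 𝒴 → ℝ)}
    (hs : Convex ℝ s) : ConvexOn ℝ s fun Q : 𝒳 × 𝒴 → ℝ => ∑ x, ∑ y, Q (x, y) * w x :=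
  ⟨hs, fun _ _ _ _ a b _ _ _ => le_of_eq <| by
    simp only [Pi.add_apply, Pi.smul_apply, smul_eq_mul, Finset.mul_sum, ← Finset.sum_add_distrib]
    exact Finset.sum_congr rfl fun x _ => Finset.sum_congr rfl fun y _ => by ring⟩

lemma concaveOn_condEnt [Fintype 𝒳] [Fintype 𝒴] :
    ConcaveOn ℝ (Set.Ici 0) (condEnt : (𝒳 × 𝒴 → ℝ) → ℝ) := by
  refine ⟨convex_Ici 0, fun Q₁ hQ₁ Q₂ hQ₂ a b ha hb hab => ?_⟩
  simp only [condEnt, smul_eq_mul, margY_add, margY_smul, Pi.add_apply, Pi.smul_apply,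
    mul_neg, ← neg_add, neg_le_neg_iff, Finset.mul_sum, ← Finset.sum_add_distrib]
  exact Finset.sum_le_sum fun x _ => Finset.sum_le_sum fun y _ =>
    mul_log_div_convex_combination_le ha hb (hQ₁ _) (hQ₂ _) (margY_nonneg hQ₁ y)
      (margY_nonneg hQ₂ y) (fun h => margY_eq_zero hQ₁ h x) (fun h => margY_eq_zero hQ₂ h x)

lemma condEnt_le_card_sub_one [Fintype 𝒳] [Fintype 𝒴] {Q : 𝒳 × 𝒴 → ℝ} (hQ : IsProb Q) :
    condEnt Q ≤ Fintype.card 𝒳 - 1 := by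
  have h := Finset.sum_le_sum fun x (_ : x ∈ Finset.univ) => Finset.sum_le_sum
    fun y (_ : y ∈ Finset.univ) => sub_le_mul_log_div (hQ.1 (x, y)) (margY_nonneg hQ.1 y)
      (fun h => margY_eq_zero hQ.1 h x)
  simp only [Finset.sum_sub_distrib, sum_margY, hQ.2, ← Fintype.sum_prod_type] at h
  simp only [condEnt, Finset.sum_const, Finset.card_univ, nsmul_eq_mul, mul_one] at h ⊢
  linarith

end Marginals

lemma nonneg_of_forall_le_add_mul {a b d : ℝ} (h : ∀ s : ℝ, 0 ≤ s → a ≤ b + s * d) : 0 ≤ d := by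
  by_contra! hd
  have hab : a ≤ b := by simpa using h 0 le_rfl
  have e : (b - a + 1) / -d * -d = b - a + 1 := div_mul_cancel₀ _ (by linarith)
  linarith [h ((b - a + 1) / -d) (div_nonneg (by linarith) (by linarith))]

section Lagrange

variable {E ι : Type*} [AddCommGroup E] [Module ℝ E] [Fintype ι]

lemma StrongDual.apply_prod_pi [DecidableEq ι] (φ : StrongDual ℝ (ℝ × (ι → ℝ))) (a : ℝ)
    (v : ι → ℝ) : φ (a, v) = a * φ (1, 0) + ∑ i, v i * φ (0, Pi.single i 1) := by
  have hv : (a, v) = a • ((1 : ℝ), (0 : ι → ℝ)) + ∑ i, v i • ((0 : ℝ), Pi.single i (1 : ℝ)) := by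
    ext
    · simp [Prod.fst_sum]
    · simp [Prod.snd_sum, Finset.sum_apply, Pi.single_apply]
  rw [hv]
  simp only [map_add, map_sum, map_smul, smul_eq_mul]

theorem ConvexOn.exists_lagrange_multipliers {C : Set E} {f : E → ℝ} {g : ι → E → ℝ}
    (hf : ConvexOn ℝ C f) (hg : ∀ i, ConvexOn ℝ C (g i)) (hslater : ∃ x ∈ C, ∀ i, g i x < 0)
    {m : ℝ} (hm : ∀ x ∈ C, (∀ i, g i x ≤ 0) → m ≤ f x) :
    ∃ μ : ι → ℝ, (∀ i, 0 ≤ μ i) ∧ ∀ x ∈ C, m ≤ f x + ∑ i, μ i * g i x := by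
  classical
  obtain ⟨x₀, hx₀, hgx₀⟩ := hslater
  -- Separate the open orthant below `(m, 0)` from the set of points dominating some
  -- `(f x, g x)`; Slater's point forces the `f`-coefficient `c₀` of the functional to be positive.
  set F : E → ℝ × (ι → ℝ) := fun x => (f x, fun i => g i x)
  set B : Set (ℝ × (ι → ℝ)) := Set.Iio m ×ˢ Set.univ.pi fun _ => Set.Iio 0
  set A : Set (ℝ × (ι → ℝ)) := {p | ∃ x ∈ C, F x ≤ p}
  have hBopen : IsOpen B := isOpen_Iio.prod (isOpen_set_pi Set.finite_univ fun _ _ => isOpen_Iio)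
  have hBconv : Convex ℝ B := (convex_Iio m).prod (convex_pi fun _ _ => convex_Iio 0)
  have hAconv : Convex ℝ A := by
    rintro p ⟨x, hx, hxp⟩ q ⟨y, hy, hyq⟩ a b ha hb hab
    refine ⟨a • x + b • y, hf.1 hx hy ha hb hab, le_trans ?_ (add_le_add
      (smul_le_smul_of_nonneg_left hxp ha) (smul_le_smul_of_nonneg_left hyq hb))⟩
    exact ⟨hf.2 hx hy ha hb hab, fun i => (hg i).2 hx hy ha hb hab⟩
  have hdisj : Disjoint B A := by
    rw [Set.disjoint_left]
    rintro p ⟨hp₁, hp₂⟩ ⟨x, hx, hfx, hgx⟩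
    have := hm x hx fun i => (hgx i).trans (hp₂ i trivial).le
    exact absurd (this.trans hfx) (not_le.2 hp₁)
  obtain ⟨φ, u, hφB, hφA⟩ := geometric_hahn_banach_open hBconv hBopen hAconv hdisj
  set c₀ := φ (1, 0)
  set c : ι → ℝ := fun i => φ (0, Pi.single i 1)
  have hφ : ∀ a v, φ (a, v) = a * c₀ + ∑ i, v i * c i := φ.apply_prod_pi
  have hA : ∀ x ∈ C, ∀ p, 0 ≤ p → u ≤ φ (F x) + φ p := fun x hx p hp =>
    (hφA _ ⟨x, hx, le_add_of_nonneg_right hp⟩).trans_eq (map_add φ _ _)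
  have hc₀ : 0 ≤ c₀ := nonneg_of_forall_le_add_mul (a := u) (b := φ (F x₀)) fun s hs => by
    simpa only [map_smul, smul_eq_mul] using
      hA x₀ hx₀ (s • (1, 0)) (smul_nonneg hs (by simp [Prod.le_def]))
  have hc : ∀ i, 0 ≤ c i := fun i =>
    nonneg_of_forall_le_add_mul (a := u) (b := φ (F x₀)) fun s hs => by
      simpa only [map_smul, smul_eq_mul] using hA x₀ hx₀ (s • (0, Pi.single i 1))
        (smul_nonneg hs (by simp [Prod.le_def, Pi.single_nonneg]))
  have hmc₀ : m * c₀ ≤ u := by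
    have hlim : Tendsto (fun ε : ℝ => φ (m - ε, fun _ => -ε)) (𝓝[>] 0) (𝓝 (m * c₀)) := by
      have hcont : Continuous fun ε : ℝ => φ (m - ε, fun _ => -ε) := by fun_prop
      convert (hcont.tendsto 0).mono_left nhdsWithin_le_nhds using 2
      simp [hφ]
    refine le_of_tendsto hlim (eventually_nhdsWithin_of_forall fun ε (hε : 0 < ε) => ?_)
    exact (hφB _ ⟨by simpa using hε, fun i _ => by simpa using hε⟩).le
  have hAF : ∀ x ∈ C, u ≤ f x * c₀ + ∑ i, g i x * c i := fun x hx =>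
    (hφA _ ⟨x, hx, le_rfl⟩).trans_eq (hφ _ _)
  have hc₀_pos : 0 < c₀ := by
    refine hc₀.lt_of_ne' fun h => ?_
    have h₁ := hφB (m - 1, fun i => g i x₀) ⟨by simp, fun i _ => hgx₀ i⟩
    have h₂ := hAF x₀ hx₀
    rw [hφ, h] at h₁
    rw [h] at h₂
    linarith
  refine ⟨fun i => c i / c₀, fun i => div_nonneg (hc i) hc₀, fun x hx => ?_⟩
  rw [← mul_le_mul_iff_of_pos_right hc₀_pos]
  convert hmc₀.trans (hAF x hx) using 1
  simp only [add_mul, Finset.sum_mul]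
  congr 1
  refine Finset.sum_congr rfl fun i _ => ?_
  field_simp

end Lagrange

section Penalty

variable {E : Type*} [AddCommGroup E] [Module ℝ E] {C : Set E} {f g h : E → ℝ} {c : ℝ}

lemma mul_le_max_zero {l a : ℝ} (hl₀ : 0 ≤ l) (hl₁ : l ≤ 1) : l * a ≤ max a 0 := by
  rcases le_total 0 a with ha | ha
  · exact (mul_le_of_le_one_left ha hl₁).trans (le_max_left a 0)
  · exact (mul_nonpos_of_nonneg_of_nonpos hl₀ ha).trans (le_max_right a 0)

/-- The constraint `max (g x) 0 ≤ t` is split into the two convex constraints `g x - t ≤ 0` and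
`-t ≤ 0`; the latter is built into the domain, and the multiplier of the former is at most `1`
because the Lagrangian must stay bounded below as `t → ∞`. -/
theorem ConvexOn.exists_lagrange_multipliers_add_max (hf : ConvexOn ℝ C f)
    (hg : ConvexOn ℝ C g) (hh : ConvexOn ℝ C h) (hslater : ∃ x ∈ C, h x < c) {m : ℝ}
    (hm : ∀ x ∈ C, h x ≤ c → m ≤ f x + max (g x) 0) :
    ∃ l r : ℝ, 0 ≤ l ∧ l ≤ 1 ∧ 0 ≤ r ∧ ∀ x ∈ C, m ≤ f x + l * g x + r * (h x - c) := by
  obtain ⟨x₀, hx₀, hhx₀⟩ := hslater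
  set C' : Set (E × ℝ) := C ×ˢ Set.Ici 0
  have hC' : Convex ℝ C' := hf.1.prod (convex_Ici 0)
  have hfst : ∀ {φ : E → ℝ}, ConvexOn ℝ C φ → ConvexOn ℝ C' fun q => φ q.1 := fun hφ =>
    (hφ.comp_linearMap (LinearMap.fst ℝ E ℝ)).subset (fun q hq => hq.1) hC'
  have hsnd : ConvexOn ℝ C' (fun q : E × ℝ => q.2) ∧ ConcaveOn ℝ C' (fun q : E × ℝ => q.2) :=
    ⟨(LinearMap.snd ℝ E ℝ).convexOn hC', (LinearMap.snd ℝ E ℝ).concaveOn hC'⟩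
  obtain ⟨μ, hμ, hμC'⟩ := ConvexOn.exists_lagrange_multipliers (C := C') (m := m)
    (f := fun q => f q.1 + q.2) (g := ![fun q => g q.1 - q.2, fun q => h q.1 - c])
    ((hfst hf).add hsnd.1)
    (Fin.forall_fin_two.2 ⟨(hfst hg).sub hsnd.2, (hfst hh).sub (concaveOn_const c hC')⟩)
    ⟨(x₀, |g x₀| + 1), ⟨hx₀, by simp only [Set.mem_Ici]; positivity⟩,
      Fin.forall_fin_two.2 ⟨by simp only [Matrix.cons_val_zero]; linarith [le_abs_self (g x₀)],
        by simpa using hhx₀⟩⟩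
    (fun q hq hgq => by
      have hg₀ : g q.1 ≤ q.2 := sub_nonpos.1 (hgq 0)
      have hh₁ : h q.1 ≤ c := sub_nonpos.1 (hgq 1)
      linarith [hm q.1 hq.1 hh₁, max_le hg₀ hq.2])
  simp only [Fin.sum_univ_two, Matrix.cons_val_zero, Matrix.cons_val_one] at hμC'
  have hμ₀ : 0 ≤ 1 - μ 0 :=
    nonneg_of_forall_le_add_mul (a := m) (b := f x₀ + μ 0 * g x₀ + μ 1 * (h x₀ - c))
      fun s hs => (hμC' (x₀, s) ⟨hx₀, hs⟩).trans_eq (by ring)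
  refine ⟨μ 0, μ 1, hμ 0, by linarith, hμ 1, fun x hx => ?_⟩
  simpa [add_assoc] using hμC' (x, 0) ⟨hx, Set.self_mem_Ici⟩

-- Without the boundedness hypotheses the inner infima could be the junk value of `sInf` on a set
-- unbounded below.
theorem ConvexOn.sInf_add_max_eq_sSup_lagrangian (hf : ConvexOn ℝ C f) (hg : ConvexOn ℝ C g)
    (hh : ConvexOn ℝ C h) (hf_bdd : BddBelow (f '' C)) (hg_bdd : BddBelow (g '' C))
    (hh_bdd : BddBelow (h '' C)) (hslater : ∃ x ∈ C, h x < c) :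
    sInf {v | ∃ x, x ∈ C ∧ h x ≤ c ∧ v = f x + max (g x) 0} =
      sSup {v | ∃ l r : ℝ, 0 ≤ l ∧ l ≤ 1 ∧ 0 ≤ r ∧
        v = sInf {u | ∃ x, x ∈ C ∧ u = f x + l * g x + r * (h x - c)}} := by
  obtain ⟨x₀, hx₀, hhx₀⟩ := hslater
  obtain ⟨Lf, hLf⟩ := hf_bdd
  obtain ⟨Lg, hLg⟩ := hg_bdd
  obtain ⟨Lh, hLh⟩ := hh_bdd
  set T := {v | ∃ x, x ∈ C ∧ h x ≤ c ∧ v = f x + max (g x) 0}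
  have hT_bdd : BddBelow T := ⟨Lf, by
    rintro _ ⟨x, hx, -, rfl⟩
    linarith [hLf ⟨x, hx, rfl⟩, le_max_right (g x) 0]⟩
  have hT_ne : T.Nonempty := ⟨_, x₀, hx₀, hhx₀.le, rfl⟩
  have weak : ∀ l r : ℝ, 0 ≤ l → l ≤ 1 → 0 ≤ r →
      sInf {u | ∃ x, x ∈ C ∧ u = f x + l * g x + r * (h x - c)} ≤ sInf T := by
    intro l r hl₀ hl₁ hr
    have hbdd : BddBelow {u | ∃ x, x ∈ C ∧ u = f x + l * g x + r * (h x - c)} :=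
      ⟨Lf + l * Lg + r * (Lh - c), by
        rintro _ ⟨x, hx, rfl⟩
        have := hLf ⟨x, hx, rfl⟩
        have := hLg ⟨x, hx, rfl⟩
        have := hLh ⟨x, hx, rfl⟩
        gcongr⟩
    refine le_csInf hT_ne ?_
    rintro _ ⟨x, hx, hxc, rfl⟩
    refine (csInf_le hbdd ⟨x, hx, rfl⟩).trans ?_
    linarith [mul_le_max_zero (a := g x) hl₀ hl₁,
      mul_nonpos_of_nonneg_of_nonpos hr (sub_nonpos.2 hxc)]
  obtain ⟨l, r, hl₀, hl₁, hr, hlr⟩ := hf.exists_lagrange_multipliers_add_max hg hh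
    ⟨x₀, hx₀, hhx₀⟩ (m := sInf T) fun x hx hxc => csInf_le hT_bdd ⟨x, hx, hxc, rfl⟩
  have strong : sInf T ≤ sInf {u | ∃ x, x ∈ C ∧ u = f x + l * g x + r * (h x - c)} :=
    le_csInf ⟨_, x₀, hx₀, rfl⟩ fun _ ⟨x, hx, hu⟩ => hu ▸ hlr x hx
  symm
  refine IsGreatest.csSup_eq ⟨⟨l, r, hl₀, hl₁, hr, strong.antisymm (weak l r hl₀ hl₁ hr)⟩, ?_⟩
  rintro _ ⟨l', r', hl₀', hl₁', hr', rfl⟩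
  exact weak l' r' hl₀' hl₁' hr'

end Penalty

theorem stmt_13_general {𝒳 𝒴 : Type*} [Fintype 𝒳] [Fintype 𝒴] [Nonempty 𝒴]
    (P : 𝒳 × 𝒴 → ℝ) (hP : IsProb P) (hPpos : ∀ p, 0 < P p)
    (E0 : ℝ) (hE0 : 0 < E0) :
    sInf {v | ∃ Q : 𝒳 × 𝒴 → ℝ, IsProb Q ∧ KL (margX Q) (margX P) ≤ E0 ∧
        v = KL Q P +
          max ((∑ x, ∑ y, Q (x, y) * Real.log (1 / margX P x)) - E0 - condEnt Q) 0}
      = sSup {v | ∃ l r : ℝ, 0 ≤ l ∧ l ≤ 1 ∧ 0 ≤ r ∧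
          v = sInf {u | ∃ Q : 𝒳 × 𝒴 → ℝ, IsProb Q ∧
              u = KL Q P +
                l * ((∑ x, ∑ y, Q (x, y) * Real.log (1 / margX P x)) - E0 - condEnt Q) +
                r * (KL (margX Q) (margX P) - E0)}} := by
  have hPX : ∀ x, 0 < margX P x := margX_pos hPpos
  have hsub : {Q : 𝒳 × 𝒴 → ℝ | IsProb Q} ⊆ Set.Ici 0 := fun Q hQ => hQ.1
  have hconv : Convex ℝ {Q : 𝒳 × 𝒴 → ℝ | IsProb Q} := convex_stdSimplex ℝ _
  have hg : ConvexOn ℝ (Set.Ici 0) fun Q : 𝒳 × 𝒴 → ℝ =>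
      (∑ x, ∑ y, Q (x, y) * log (1 / margX P x)) - E0 - condEnt Q :=
    ((convexOn_sum_mul _ (convex_Ici 0)).sub (concaveOn_const E0 (convex_Ici 0))).sub
      concaveOn_condEnt
  refine ConvexOn.sInf_add_max_eq_sSup_lagrangian ((convexOn_KL hPpos).subset hsub hconv)
    (hg.subset hsub hconv) ((convexOn_KL_margX hPpos).subset hsub hconv) ?_ ?_ ?_
    ⟨P, hP, show KL (margX P) (margX P) < E0 by rwa [KL_self_s13]⟩
  · exact ⟨0, by
      rintro _ ⟨Q, hQ, rfl⟩
      exact KL_nonneg hQ hP fun p h => absurd h (hPpos p).ne'⟩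
  · refine ⟨-E0 - (Fintype.card 𝒳 - 1), ?_⟩
    rintro _ ⟨Q, hQ, rfl⟩
    have hlog : ∀ x, 0 ≤ log (1 / margX P x) := fun x =>
      log_nonneg (one_le_one_div (hPX x) ((isProb_margX hP).le_one x))
    have hS : 0 ≤ ∑ x, ∑ y, Q (x, y) * log (1 / margX P x) :=
      Finset.sum_nonneg fun x _ => Finset.sum_nonneg fun y _ => mul_nonneg (hQ.1 _) (hlog x)
    linarith [condEnt_le_card_sub_one hQ]
  · exact ⟨0, by
      rintro _ ⟨Q, hQ, rfl⟩
      exact KL_nonneg (isProb_margX hQ) (isProb_margX hP) fun x h => absurd h (hPX x).ne'⟩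

/-- Lagrange duality step in the proof of Theorem 1. -/
theorem stmt_13 {𝒳 𝒴 : Type*} [Fintype 𝒳] [Nonempty 𝒳] [Fintype 𝒴] [Nonempty 𝒴]
    (P : 𝒳 × 𝒴 → ℝ) (hP : IsProb P) (hPpos : ∀ p, 0 < P p)
    (E0 : ℝ) (hE0 : 0 < E0) :
    sInf {v | ∃ Q : 𝒳 × 𝒴 → ℝ, IsProb Q ∧ KL (margX Q) (margX P) ≤ E0 ∧
        v = KL Q P +
          max ((∑ x, ∑ y, Q (x, y) * Real.log (1 / margX P x)) - E0 - condEnt Q) 0}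
      = sSup {v | ∃ l r : ℝ, 0 ≤ l ∧ l ≤ 1 ∧ 0 ≤ r ∧
          v = sInf {u | ∃ Q : 𝒳 × 𝒴 → ℝ, IsProb Q ∧
              u = KL Q P +
                l * ((∑ x, ∑ y, Q (x, y) * Real.log (1 / margX P x)) - E0 - condEnt Q) +
                r * (KL (margX Q) (margX P) - E0)}} :=
  stmt_13_general P hP hPpos E0 hE0
end
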